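/- (Weak duality) Let φ: [0,∞) → ℝ be convex and superlinear with Legendre transform ψ, let ε > 0, H, Q_0,…,Q_M Hermitian operators, q ∈ ℝ^{M+1}. Then for every positive semidefinite Hermitian π with Tr[Q_i π] = q_i for all i, and every α ∈ ℝ^{M+1}, one has Tr[Hπ] + ε Tr[φ(π)] ≥ Σ_i α_i q_i − ε Tr[ψ((Σ_i α_i Q_i − H)/ε)]. -/

import Mathlib

open scoped ComplexOrder

open Matrix Filter Topology

/-! The scalar Fenchel–Young inequality `t x ≤ ψ t + φ x` (the supremum defining `ψ t` is
finite because `φ` is superlinear and, being convex, bounded below on compact intervals) lifts to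
traces: for `A = V diag(a) V*` and `B = U diag(b) U*` one has `Re Tr[AB] = ∑ a_j b_k |W_jk|²` with
`W = V* U` unitary, so `(|W_jk|²)` is doubly stochastic and summing the scalar inequality against
it gives `Re Tr[AB] ≤ Tr ψ(A) + Tr φ(B)`. For `A = (∑ α_i Q_i − H)/ε` and `B = π` the constraints
turn `ε Re Tr[Aπ]` into `∑ α_i q_i − Re Tr[Hπ]`. -/

/-- Trace of `g` applied to a Hermitian matrix via functional calculus
(junk value `0` on non-Hermitian matrices). -/
noncomputable def traceFun {n : Type*} [Fintype n] [DecidableEq n]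
    (g : ℝ → ℝ) (A : Matrix n n ℂ) : ℝ :=
  if h : A.IsHermitian then ∑ i, g (h.eigenvalues i) else 0

/-- The Legendre transform of `φ : [0,∞) → ℝ`, i.e. `ψ t = sup_{x ≥ 0} (t x - φ x)`. -/
noncomputable def legendre (φ : ℝ → ℝ) (t : ℝ) : ℝ :=
  sSup ((fun x => t * x - φ x) '' Set.Ici 0)

open Set in
theorem ConvexOn.bddBelow_image_Icc {f : ℝ → ℝ} {a : ℝ} (hf : ConvexOn ℝ (Ici a) f) (b : ℝ) :
    BddBelow (f '' Icc a b) := by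
  refine ⟨f b - (b - a) * |f (b + 1) - f b|, ?_⟩
  rintro _ ⟨x, ⟨hax, hxb⟩, rfl⟩
  have hab : 0 ≤ b - a := by linarith
  rcases hxb.lt_or_eq with hxb | rfl
  · have hslope := hf.slope_mono_adjacent hax (mem_Ici.2 (by linarith)) hxb
      (lt_add_one b)
    rw [add_sub_cancel_left, div_one, div_le_iff₀ (sub_pos.2 hxb)] at hslope
    nlinarith [le_abs_self (f (b + 1) - f b), abs_nonneg (f (b + 1) - f b)]
  · nlinarith [abs_nonneg (f (x + 1) - f x)]

theorem bddAbove_mul_sub_image_Ici {φ : ℝ → ℝ} (hconv : ConvexOn ℝ (Set.Ici 0) φ)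
    (hsl : Tendsto (fun x => φ x / x) atTop atTop) (t : ℝ) :
    BddAbove ((fun x => t * x - φ x) '' Set.Ici 0) := by
  obtain ⟨N, hN⟩ := eventually_atTop.mp (hsl.eventually_ge_atTop t)
  set c := max N 1
  obtain ⟨m, hm⟩ := hconv.bddBelow_image_Icc c
  refine ⟨max (|t| * c - m) 0, ?_⟩
  rintro _ ⟨x, hx, rfl⟩
  rcases le_or_gt x c with hxc | hcx
  · have htx : t * x ≤ |t| * c :=
      (mul_le_mul_of_nonneg_right (le_abs_self t) hx).trans
        (mul_le_mul_of_nonneg_left hxc (abs_nonneg t))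
    have hφx : m ≤ φ x := hm ⟨x, ⟨hx, hxc⟩, rfl⟩
    exact le_max_of_le_left (by linarith)
  · have hx0 : 0 < x := (zero_lt_one.trans_le (le_max_right N 1)).trans hcx
    have htx := hN x ((le_max_left N 1).trans hcx.le)
    rw [le_div_iff₀ hx0] at htx
    exact le_max_of_le_right (by linarith)

theorem mul_le_legendre_add {φ : ℝ → ℝ} (hconv : ConvexOn ℝ (Set.Ici 0) φ)
    (hsl : Tendsto (fun x => φ x / x) atTop atTop) (t : ℝ) {x : ℝ} (hx : 0 ≤ x) :
    t * x ≤ legendre φ t + φ x := by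
  have := le_csSup (bddAbove_mul_sub_image_Ici hconv hsl t) ⟨x, hx, rfl⟩
  rw [legendre]
  linarith

section

variable {n : Type*} [Fintype n] [DecidableEq n]

theorem Matrix.sum_sum_mul_le_of_mem_doublyStochastic {c : Matrix n n ℝ}
    (hc : c ∈ doublyStochastic ℝ n) {u : n → n → ℝ} {f g : n → ℝ}
    (hu : ∀ j k, u j k ≤ f j + g k) :
    ∑ j, ∑ k, u j k * c j k ≤ ∑ j, f j + ∑ k, g k :=
  calc ∑ j, ∑ k, u j k * c j k
      ≤ ∑ j, ∑ k, (f j + g k) * c j k := by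
        gcongr with j _ k _
        exacts [nonneg_of_mem_doublyStochastic hc, hu j k]
    _ = ∑ j, f j * ∑ k, c j k + ∑ k, g k * ∑ j, c j k := by
        simp only [add_mul, Finset.sum_add_distrib, Finset.mul_sum]
        rw [Finset.sum_comm (f := fun j k => g k * c j k)]
    _ = ∑ j, f j + ∑ k, g k := by
        simp [sum_row_of_mem_doublyStochastic hc, sum_col_of_mem_doublyStochastic hc]

theorem Matrix.normSq_apply_mem_doublyStochastic {U : Matrix n n ℂ}
    (hU : U ∈ unitaryGroup n ℂ) :
    Matrix.of (fun j k => Complex.normSq (U j k)) ∈ doublyStochastic ℝ n := by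
  refine mem_doublyStochastic_iff_sum.2
    ⟨fun j k => Complex.normSq_nonneg _, fun j => ?_, fun k => ?_⟩
  · have h := congr_fun₂ (mem_unitaryGroup_iff.1 hU) j j
    simp only [mul_apply, star_apply, Complex.star_def, Complex.mul_conj, one_apply_eq] at h
    exact_mod_cast h
  · have h := congr_fun₂ (mem_unitaryGroup_iff'.1 hU) k k
    simp only [mul_apply, star_apply, Complex.star_def, mul_comm (starRingEnd ℂ _),
      Complex.mul_conj, one_apply_eq] at h
    exact_mod_cast h

theorem Matrix.trace_diagonal_mul_mul_diagonal_mul_star (a b : n → ℝ) (W : Matrix n n ℂ) :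
    trace (diagonal (fun j => (a j : ℂ)) * W * diagonal (fun k => (b k : ℂ)) * star W) =
      ((∑ j, ∑ k, a j * b k * Complex.normSq (W j k) : ℝ) : ℂ) := by
  push_cast
  refine Finset.sum_congr rfl fun j _ => Finset.sum_congr rfl fun k _ => ?_
  simp only [mul_diagonal, diagonal_mul, star_apply, Complex.star_def, ← Complex.mul_conj]
  ring

theorem Matrix.IsHermitian.re_trace_mul {A B : Matrix n n ℂ} (hA : A.IsHermitian)
    (hB : B.IsHermitian) :
    (trace (A * B)).re = ∑ j, ∑ k, hA.eigenvalues j * hB.eigenvalues k *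
      Complex.normSq ((star (hA.eigenvectorUnitary : Matrix n n ℂ) *
        hB.eigenvectorUnitary) j k) := by
  set V : Matrix n n ℂ := ↑hA.eigenvectorUnitary
  set U : Matrix n n ℂ := ↑hB.eigenvectorUnitary
  have hAB : trace (A * B) = trace (diagonal (fun j => (hA.eigenvalues j : ℂ)) * (star V * U) *
      diagonal (fun k => (hB.eigenvalues k : ℂ)) * star (star V * U)) := by
    conv_lhs => rw [hA.spectral_theorem, hB.spectral_theorem]
    simp only [Unitary.conjStarAlgAut_apply, star_mul, star_star, Matrix.mul_assoc]
    rw [trace_mul_comm]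
    simp only [Matrix.mul_assoc]
    rfl
  rw [hAB, trace_diagonal_mul_mul_diagonal_mul_star, Complex.ofReal_re]

theorem Matrix.re_trace_mul_le_traceFun_add_traceFun {φ ψ : ℝ → ℝ}
    (hfy : ∀ t x : ℝ, 0 ≤ x → t * x ≤ ψ t + φ x) {A B : Matrix n n ℂ}
    (hA : A.IsHermitian) (hB : B.PosSemidef) :
    (trace (A * B)).re ≤ traceFun ψ A + traceFun φ B := by
  have hW : star (hA.eigenvectorUnitary : Matrix n n ℂ) * hB.1.eigenvectorUnitary ∈
      unitaryGroup n ℂ :=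
    (star hA.eigenvectorUnitary * hB.1.eigenvectorUnitary).2
  rw [traceFun, dif_pos hA, traceFun, dif_pos hB.1, hA.re_trace_mul hB.1]
  exact sum_sum_mul_le_of_mem_doublyStochastic (normSq_apply_mem_doublyStochastic hW)
    fun j k => hfy _ _ (hB.eigenvalues_nonneg k)

end

/-- Weak duality: for every admissible `π` and every `α ∈ ℝ^{M+1}`,
`Tr[Hπ] + ε Tr[φ(π)] ≥ ∑ α_i q_i − ε Tr[ψ((∑ α_i Q_i − H)/ε)]` with `ψ = φ*`. -/
theorem stmt8 {d M : ℕ} (φ : ℝ → ℝ) (hconv : ConvexOn ℝ (Set.Ici 0) φ)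
    (hsl : Tendsto (fun t => φ t / t) atTop atTop)
    (ε : ℝ) (hε : 0 < ε)
    (H : Matrix (Fin d) (Fin d) ℂ) (hH : H.IsHermitian)
    (Q : Fin (M + 1) → Matrix (Fin d) (Fin d) ℂ) (hQ : ∀ i, (Q i).IsHermitian)
    (q : Fin (M + 1) → ℝ)
    (π : Matrix (Fin d) (Fin d) ℂ) (hπ : π.PosSemidef)
    (hadm : ∀ i, Matrix.trace (Q i * π) = (q i : ℂ))
    (α : Fin (M + 1) → ℝ) :
    (∑ i, α i * q i) -
        ε * traceFun (legendre φ) (ε⁻¹ • (∑ i, α i • Q i - H)) ≤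
      (Matrix.trace (H * π)).re + ε * traceFun φ π := by
  set S := ∑ i, α i • Q i
  have hS : S.IsHermitian :=
    isSelfAdjoint_sum _ fun i _ => (hQ i).smul (IsSelfAdjoint.all (α i))
  have hA : (ε⁻¹ • (S - H)).IsHermitian := (hS.sub hH).smul (IsSelfAdjoint.all ε⁻¹)
  have hSπ : (trace (S * π)).re = ∑ i, α i * q i := by
    simp [S, Matrix.sum_mul, trace_sum, hadm]
  have hAπ : ε * (trace (ε⁻¹ • (S - H) * π)).re = (trace (S * π)).re - (trace (H * π)).re := by
    simp [Matrix.sub_mul, trace_sub, hε.ne']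
  have hfy := re_trace_mul_le_traceFun_add_traceFun (mul_le_legendre_add hconv hsl) hA hπ
  linarith [mul_le_mul_of_nonneg_left hfy hε.le]
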